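/- arXiv:1409.6657 — 2 statements merged into one kernel-verified Lean document; each statement's English description precedes it below -/
import Mathlib

section
/- Let Δ be a pure (d-1)-dimensional simplicial complex with H̃_{d-1}(Δ) ≠ 0 and b(Δ) < d - 2. Then for all i < d - b(Δ) - 1, b_{i,i+d-1}(k[Δ]) = 0; i.e., k[Δ] satisfies property 𝔅_{d-b(Δ)-1}. -/
/-!
By Hochster's formula `b_{i,i+d-1}(k[Δ])` is a sum of `dim H̃_{d-2}(Δ_W)` over sets `W` of
`i + d - 1 ≤ 2d - b - 3` vertices, `b = b(Δ)`, so it suffices that every `(d-2)`-cycle `z` of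
`Δ_W` bounds in `Δ_W`. Chains live in the free module on all finite vertex sets, where coning off
a vertex `u` is a chain homotopy. Writing `z = u * y + z₀` with `y` a cycle of the link of `u`, a
filling `γ` of `y` in the link makes `z - ∂(u * γ)` a cycle on `W - u`. Passing to a vertex link
lowers both `b` and `d` by one and preserves `|W| ≤ 2d - b - 3`, which gives an induction down to
`b = 0`, where `Δ` is banner. There, for `|W| ≤ d`, the cycle is a multiple of `∂W` and
bannerness makes `W` a face. For larger `W`, vertices unused by `z` are dropped; a vertex `u`
sharing no face of `z` with some `v` allows the link step with both `u` and `v` removed (links of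
banner complexes are banner); and if there is no such pair, `W` is complete and bannerness would
make it a face, too large for `Δ`.
-/

open Finset

/-- An abstract simplicial complex on a finite linearly ordered vertex set `V`
(containing the empty face). -/
structure SComplex (V : Type) [Fintype V] [LinearOrder V] where
  faces : Set (Finset V)
  empty_mem : (∅ : Finset V) ∈ faces
  down_closed : ∀ ⦃F G : Finset V⦄, F ∈ faces → G ⊆ F → G ∈ faces

namespace SComplex

variable {V : Type} [Fintype V] [LinearOrder V]

/-- Faces of cardinality `j`. -/
def simplex (K : SComplex V) (j : ℕ) := {F : Finset V // F ∈ K.faces ∧ F.card = j}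

/-- Simplicial chains supported on faces of cardinality `j` (so `j = n + 1` gives the
`n`-dimensional chains, and `j = 0` corresponds to the empty face, yielding
*reduced* homology below). -/
abbrev chains (R : Type) [CommRing R] (K : SComplex V) (j : ℕ) := K.simplex j →₀ R

/-- The simplicial boundary map, from chains on faces of cardinality `j + 1`
to chains on faces of cardinality `j`. -/
noncomputable def bdry (R : Type) [CommRing R] (K : SComplex V) (j : ℕ) :
    K.chains R (j + 1) →ₗ[R] K.chains R j :=
  Finsupp.lsum R fun s => LinearMap.toSpanSingleton R _
    (∑ v ∈ s.1.attach, ((-1 : R) ^ ((s.1.filter (· < v.1)).card)) •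
      Finsupp.single (⟨s.1.erase v.1, K.down_closed s.2.1 (Finset.erase_subset _ _),
        by simp [Finset.card_erase_of_mem v.2, s.2.2]⟩ : K.simplex j) (1 : R))

/-- Reduced `n`-cycles (chains on faces of cardinality `n + 1` with zero boundary). -/
noncomputable def cycles (R : Type) [CommRing R] (K : SComplex V) (n : ℕ) :
    Submodule R (K.chains R (n + 1)) := LinearMap.ker (K.bdry R n)

/-- Reduced `n`-boundaries. -/
noncomputable def bdries (R : Type) [CommRing R] (K : SComplex V) (n : ℕ) :
    Submodule R (K.chains R (n + 1)) := LinearMap.range (K.bdry R (n + 1))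

/-- Reduced simplicial homology of `K` in dimension `n` with coefficients in `R`,
realized as the image of the cycles in the chains modulo the boundaries. -/
noncomputable abbrev Hred (R : Type) [CommRing R] (K : SComplex V) (n : ℕ) :=
  ↥(Submodule.map (K.bdries R n).mkQ (K.cycles R n))

/-- The induced subcomplex on a vertex subset `W`. -/
def induced (K : SComplex V) (W : Finset V) : SComplex V where
  faces := {F | F ∈ K.faces ∧ F ⊆ W}
  empty_mem := ⟨K.empty_mem, Finset.empty_subset _⟩
  down_closed := fun _ _ hF hG => ⟨K.down_closed hF.1 hG, hG.trans hF.2⟩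

/-- The underlying graph (1-skeleton) of a simplicial complex. -/
def skeleton (K : SComplex V) : SimpleGraph V where
  Adj u v := u ≠ v ∧ ({u, v} : Finset V) ∈ K.faces
  symm := by
    constructor
    intro u v h
    refine ⟨h.1.symm, ?_⟩
    rw [Finset.pair_comm]
    exact h.2
  loopless := ⟨fun v h => h.1 rfl⟩

/-- The vertex set of a simplicial complex. -/
def vertexSet (K : SComplex V) : Set V := {v | {v} ∈ K.faces}

/-- A set of vertices is complete if its elements are pairwise adjacent. -/
def IsComplete (K : SComplex V) (W : Finset V) : Prop :=
  ∀ u ∈ W, ∀ v ∈ W, u ≠ v → ({u, v} : Finset V) ∈ K.faces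

/-- A complex is flag if it is the clique complex of its 1-skeleton. -/
def IsFlag (K : SComplex V) : Prop := ∀ W : Finset V, K.IsComplete W → W ∈ K.faces

/-- One plus the dimension of `K`: the maximal cardinality of a face. -/
noncomputable def dimP1 (K : SComplex V) : ℕ := sSup {j | ∃ F ∈ K.faces, F.card = j}

/-- `K` is pure, with all facets of cardinality `d`. -/
def Pure (K : SComplex V) (d : ℕ) : Prop :=
  ∀ F ∈ K.faces, ∃ G ∈ K.faces, F ⊆ G ∧ G.card = d

/-- `K` is a minimal `n`-cycle over `R`: it is pure `n`-dimensional and supports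
precisely one homology `n`-class (up to scalars), whose support is all of `K`. -/
def IsMinimalCycle (R : Type) [CommRing R] (K : SComplex V) (n : ℕ) : Prop :=
  K.dimP1 = n + 1 ∧ K.Pure (n + 1) ∧
    ∃ ζ ∈ K.cycles R n, (∀ s : K.simplex (n + 1), ζ s ≠ 0) ∧
      ∀ z ∈ K.cycles R n, ∃ c : R, z = c • ζ

end SComplex

/-- Graded Betti numbers of the Stanley–Reisner ring of `K` over `k`, via
Hochster's formula: `b_{i,j} = ∑_{#W = j} dim_k H̃_{j-i-1}(K_W)`. -/
noncomputable def bettiH (k : Type) [Field k] {V : Type} [Fintype V] [LinearOrder V]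
    (K : SComplex V) (i j : ℕ) : ℕ :=
  ∑ W ∈ Finset.powersetCard j (Finset.univ : Finset V),
    Module.finrank k (SComplex.Hred k (K.induced W) (j - i - 1))

/-- A graph is `m`-connected if it has at least `m` vertices and removing
any set of fewer than `m` vertices leaves a connected graph. -/
def KConn {V : Type} [Fintype V] (G : SimpleGraph V) (m : ℕ) : Prop :=
  m ≤ Fintype.card V ∧
    ∀ S : Finset V, S.card < m → (SimpleGraph.induce ((↑S : Set V)ᶜ) G).Connected

/-- The vertex connectivity of a graph: the largest `m` such that it is `m`-connected. -/
noncomputable def connectivity {V : Type} [Fintype V] (G : SimpleGraph V) : ℕ :=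
  sSup {m | KConn G m}


namespace SComplex

variable {V : Type} [Fintype V] [LinearOrder V]

/-- The link of a face `σ` of `K`. -/
def link (K : SComplex V) (s : Finset V) (hs : s ∈ K.faces) : SComplex V where
  faces := {t | t ∩ s = ∅ ∧ t ∪ s ∈ K.faces}
  empty_mem := ⟨Finset.empty_inter s, by simpa using hs⟩
  down_closed := by
    intro F G hF hG
    constructor
    · rw [← Finset.subset_empty, ← hF.1]
      exact Finset.inter_subset_inter hG (Finset.Subset.refl s)
    · exact K.down_closed hF.2 (Finset.union_subset_union hG (Finset.Subset.refl s))

/-- The degree of a face: the maximal cardinality of a facet containing it. -/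
noncomputable def degree (K : SComplex V) (s : Finset V) : ℕ :=
  sSup {j | ∃ F ∈ K.faces, s ⊆ F ∧ F.card = j}

/-- `K` is banner if every critical complete set of size at least `dim K + 1`
is a face of `K`. -/
def IsBanner (K : SComplex V) : Prop :=
  ∀ W : Finset V, K.IsComplete W → (∃ v ∈ W, W.erase v ∈ K.faces) →
    K.dimP1 ≤ W.card → W ∈ K.faces

/-- `K` is (isomorphic to) the boundary of the 2-simplex. -/
def IsBdTwoSimplex (K : SComplex V) : Prop :=
  ∃ a b c : V, a ≠ b ∧ a ≠ c ∧ b ≠ c ∧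
    K.faces = {F | F ⊆ ({a, b, c} : Finset V) ∧ F ≠ ({a, b, c} : Finset V)}

/-- The banner number of `K`: the least `b` such that the link of every face of
cardinality `b` and degree `dim K + 1` is banner or the boundary of the 2-simplex. -/
noncomputable def bannerNumber (K : SComplex V) : ℕ :=
  sInf {b | ∀ s : Finset V, ∀ hs : s ∈ K.faces, s.card = b → K.degree s = K.dimP1 →
    IsBanner (K.link s hs) ∨ IsBdTwoSimplex (K.link s hs)}

end SComplex

namespace FinsetChain

open Finsupp

variable {V : Type*} [LinearOrder V] (R : Type*) [CommRing R]

def sgn (F : Finset V) (u : V) : R := (-1) ^ #{v ∈ F | v < u}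

noncomputable def boundary : (Finset V →₀ R) →ₗ[R] Finset V →₀ R :=
  linearCombination R fun F => ∑ v ∈ F, sgn R F v • single (F.erase v) 1

noncomputable def cone (u : V) : (Finset V →₀ R) →ₗ[R] Finset V →₀ R :=
  linearCombination R fun F => if u ∈ F then 0 else sgn R F u • single (insert u F) 1

noncomputable def linkChain (u : V) : (Finset V →₀ R) →ₗ[R] Finset V →₀ R :=
  linearCombination R fun F => if u ∈ F then sgn R F u • single (F.erase u) 1 else 0

variable {R}

theorem linearCombination_mem_of_forall_mem_support {α M : Type*} [AddCommMonoid M]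
    [Module R M] {f : α → M} {N : Submodule R M} {x : α →₀ R} (h : ∀ a ∈ x.support, f a ∈ N) :
    linearCombination R f x ∈ N := by
  rw [linearCombination_apply]
  exact N.sum_mem fun a ha => N.smul_mem _ (h a ha)

theorem sgn_mul_self (F : Finset V) (u : V) : sgn R F u * sgn R F u = 1 := by
  rw [sgn, ← mul_pow, neg_one_mul, neg_neg, one_pow]

theorem isUnit_sgn (F : Finset V) (u : V) : IsUnit (sgn R F u) :=
  isUnit_one.neg.pow _

theorem sgn_insert_self (F : Finset V) (u : V) : sgn R (insert u F) u = sgn R F u := by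
  rw [sgn, sgn, filter_insert, if_neg (lt_irrefl u)]

theorem sgn_erase_self (F : Finset V) (u : V) : sgn R (F.erase u) u = sgn R F u := by
  rw [sgn, sgn, filter_erase,
    erase_eq_of_notMem (s := {v ∈ F | v < u}) fun h => lt_irrefl u (mem_filter.mp h).2]

theorem sgn_insert {F : Finset V} {u : V} (hu : u ∉ F) (v : V) :
    sgn R (insert u F) v = if u < v then -sgn R F v else sgn R F v := by
  unfold sgn
  rw [filter_insert]
  split_ifs with h
  · rw [card_insert_of_notMem fun h' => hu (mem_filter.mp h').1, pow_succ, mul_neg_one]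
  · rfl

theorem sgn_erase {F : Finset V} {v : V} (hv : v ∈ F) (u : V) :
    sgn R F u = if v < u then -sgn R (F.erase v) u else sgn R (F.erase v) u := by
  rw [← sgn_insert (notMem_erase v F), insert_erase hv]

theorem sgn_mul_sgn_erase {F : Finset V} {u v : V} (hu : u ∈ F) (hv : v ∈ F) (huv : u ≠ v) :
    sgn R F u * sgn R (F.erase u) v = -(sgn R F v * sgn R (F.erase v) u) := by
  rw [sgn_erase hv u, sgn_erase hu v]
  rcases huv.lt_or_gt with h | h <;> simp [h, h.not_gt, mul_comm]

theorem sgn_mul_sgn_insert {F : Finset V} {u v : V} (hu : u ∉ F) (hv : v ∈ F) :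
    sgn R F u * sgn R (insert u F) v = -(sgn R F v * sgn R (F.erase v) u) := by
  rw [sgn_insert hu, sgn_erase hv u]
  rcases (ne_of_mem_of_not_mem hv hu).lt_or_gt with h | h <;> simp [h, h.not_gt, mul_comm]

theorem boundary_single (F : Finset V) (a : R) :
    boundary R (single F a) = a • ∑ v ∈ F, sgn R F v • single (F.erase v) 1 :=
  linearCombination_single _ _ _

theorem cone_single (u : V) (F : Finset V) (a : R) :
    cone R u (single F a) = a • if u ∈ F then 0 else sgn R F u • single (insert u F) 1 :=
  linearCombination_single _ _ _

theorem linkChain_single (u : V) (F : Finset V) (a : R) :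
    linkChain R u (single F a) = a • if u ∈ F then sgn R F u • single (F.erase u) 1 else 0 :=
  linearCombination_single _ _ _

theorem boundary_cone_add_cone_boundary (u : V) (x : Finset V →₀ R) :
    boundary R (cone R u x) + cone R u (boundary R x) = x := by
  suffices boundary R ∘ₗ cone R u + cone R u ∘ₗ boundary R = LinearMap.id from
    LinearMap.congr_fun this x
  ext F : 2
  simp only [LinearMap.add_apply, LinearMap.comp_apply, lsingle_apply, LinearMap.id_apply,
    cone_single, boundary_single, one_smul, map_sum, map_smul]
  by_cases hu : u ∈ F
  · rw [if_pos hu, map_zero, zero_add, sum_eq_single_of_mem u hu]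
    · rw [if_neg (notMem_erase u F), insert_erase hu, smul_smul,
        sgn_erase_self, sgn_mul_self, one_smul]
    · intro v _ hvu
      rw [if_pos (mem_erase.mpr ⟨fun h => hvu h.symm, hu⟩), smul_zero]
  · rw [if_neg hu, map_smul, boundary_single, one_smul, sum_insert hu, erase_insert hu,
      sgn_insert_self, smul_add, smul_smul, sgn_mul_self, one_smul, add_assoc, add_eq_left,
      Finset.smul_sum, ← sum_add_distrib]
    refine sum_eq_zero fun v hv => ?_
    have hvu : v ≠ u := fun h => hu (h ▸ hv)
    rw [if_neg fun h => hu (mem_of_mem_erase h), erase_insert_of_ne hvu.symm, smul_smul,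
      smul_smul, ← add_smul, sgn_mul_sgn_insert hu hv, neg_add_cancel, zero_smul]

theorem boundary_linkChain (u : V) (x : Finset V →₀ R) :
    boundary R (linkChain R u x) = -linkChain R u (boundary R x) := by
  suffices boundary R ∘ₗ linkChain R u = -(linkChain R u ∘ₗ boundary R) from
    LinearMap.congr_fun this x
  ext F : 2
  simp only [LinearMap.neg_apply, LinearMap.comp_apply, lsingle_apply, linkChain_single,
    boundary_single, one_smul, map_sum, map_smul]
  by_cases hu : u ∈ F
  · rw [if_pos hu, map_smul, boundary_single, one_smul, ← sum_erase F (a := u)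
      (by rw [if_neg (notMem_erase u F), smul_zero]), Finset.smul_sum, ← sum_neg_distrib]
    refine sum_congr rfl fun v hv => ?_
    obtain ⟨hvu, hvF⟩ := mem_erase.mp hv
    rw [if_pos (mem_erase.mpr ⟨hvu.symm, hu⟩), erase_right_comm, smul_smul, smul_smul, ← neg_smul,
      sgn_mul_sgn_erase hu hvF hvu.symm]
  · rw [if_neg hu, map_zero, eq_comm, neg_eq_zero]
    exact sum_eq_zero fun v _ => by
      rw [if_neg fun h => hu (mem_of_mem_erase h), smul_zero]

theorem cone_linkChain (u : V) (x : Finset V →₀ R) :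
    cone R u (linkChain R u x) = x.filter (u ∈ ·) := by
  induction x using Finsupp.induction_linear with
  | zero => rw [map_zero, map_zero, filter_zero]
  | add x y hx hy => rw [map_add, map_add, hx, hy, filter_add]
  | single F a =>
    rw [linkChain_single]
    by_cases hu : u ∈ F
    · rw [if_pos hu, map_smul, map_smul, cone_single, if_neg (notMem_erase u F), insert_erase hu,
        one_smul, smul_smul, smul_smul, sgn_erase_self, mul_assoc, sgn_mul_self, mul_one,
        smul_single_one, filter_single_of_pos (p := (u ∈ ·)) hu]
    · rw [if_neg hu, smul_zero, map_zero, filter_single_of_neg (p := (u ∈ ·)) hu]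

theorem boundary_cone (u : V) (x : Finset V →₀ R) :
    boundary R (cone R u x) = x - cone R u (boundary R x) :=
  eq_sub_of_add_eq (boundary_cone_add_cone_boundary u x)

theorem boundary_linkChain_eq_zero {z : Finset V →₀ R} (hz : boundary R z = 0) (u : V) :
    boundary R (linkChain R u z) = 0 := by
  rw [boundary_linkChain, hz, map_zero, neg_zero]

theorem boundary_filter_notMem {z : Finset V →₀ R} (hz : boundary R z = 0) (u : V) :
    boundary R (z.filter (u ∉ ·)) = -linkChain R u z := by
  have hcone : boundary R (cone R u (linkChain R u z)) = linkChain R u z := by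
    rw [boundary_cone, boundary_linkChain_eq_zero hz, map_zero, sub_zero]
  have hsplit : z.filter (u ∉ ·) = z - cone R u (linkChain R u z) := by
    rw [cone_linkChain, eq_sub_iff_add_eq, add_comm, filter_add_filter_not]
  rw [hsplit, map_sub, hz, hcone, zero_sub]

theorem boundary_cone_filter_notMem {z : Finset V →₀ R} (hz : boundary R z = 0) (u : V) :
    boundary R (cone R u (z.filter (u ∉ ·))) = z := by
  rw [boundary_cone, boundary_filter_notMem hz,
    map_neg, sub_neg_eq_add, cone_linkChain, add_comm, filter_add_filter_not]

theorem boundary_single_apply_erase {G : Finset V} {v : V} (hv : v ∈ G) (a : R) :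
    boundary R (single G a) (G.erase v) = a * sgn R G v := by
  rw [boundary_single, Finsupp.smul_apply, finsetSum_apply, sum_eq_single_of_mem v hv,
    Finsupp.smul_apply, single_eq_same, smul_eq_mul, smul_eq_mul, mul_one]
  intro w hw hwv
  rw [Finsupp.smul_apply, single_eq_of_ne ((erase_inj G hv).not.mpr hwv.symm), smul_zero]

theorem cone_mem_supported {u : V} {x : Finset V →₀ R} {t : Set (Finset V)}
    (h : ∀ F ∈ x.support, u ∉ F → insert u F ∈ t) : cone R u x ∈ supported R R t := by
  refine linearCombination_mem_of_forall_mem_support fun F hF => ?_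
  split_ifs with hu
  · exact zero_mem _
  · exact Submodule.smul_mem _ _ (single_mem_supported R 1 (h F hF hu))

theorem linkChain_mem_supported {u : V} {x : Finset V →₀ R} {t : Set (Finset V)}
    (h : ∀ F ∈ x.support, u ∈ F → F.erase u ∈ t) : linkChain R u x ∈ supported R R t := by
  refine linearCombination_mem_of_forall_mem_support fun F hF => ?_
  split_ifs with hu
  · exact Submodule.smul_mem _ _ (single_mem_supported R 1 (h F hF hu))
  · exact zero_mem _

end FinsetChain

namespace SComplex

variable {V : Type} [Fintype V] [LinearOrder V] {K : SComplex V}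

protected theorem ext {K L : SComplex V} (h : K.faces = L.faces) : K = L := by
  cases K; cases L; simp_all

theorem card_le_dimP1 {F : Finset V} (hF : F ∈ K.faces) : #F ≤ K.dimP1 := by
  unfold dimP1
  exact le_csSup ⟨Fintype.card V, by rintro _ ⟨G, -, rfl⟩; exact card_le_univ G⟩ ⟨F, hF, rfl⟩

theorem degree_empty : K.degree ∅ = K.dimP1 := by
  simp [degree, dimP1]

theorem exists_card_eq_degree {s : Finset V} (hs : s ∈ K.faces) :
    ∃ G ∈ K.faces, s ⊆ G ∧ #G = K.degree s :=
  Nat.sSup_mem (s := {j | ∃ G ∈ K.faces, s ⊆ G ∧ #G = j}) ⟨_, s, hs, subset_rfl, rfl⟩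
    ⟨Fintype.card V, by rintro _ ⟨G, -, -, rfl⟩; exact card_le_univ G⟩

theorem degree_eq_dimP1 {s G : Finset V} (hG : G ∈ K.faces) (hsG : s ⊆ G)
    (hcard : #G = K.dimP1) : K.degree s = K.dimP1 :=
  le_antisymm (csSup_le ⟨_, G, hG, hsG, rfl⟩ fun _ ⟨_, hF, _, hj⟩ => hj ▸ card_le_dimP1 hF)
    (le_csSup ⟨Fintype.card V, by rintro _ ⟨F, -, -, rfl⟩; exact card_le_univ F⟩
      ⟨G, hG, hsG, hcard⟩)

theorem mem_link_singleton {u : V} (hu : {u} ∈ K.faces) {t : Finset V} :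
    t ∈ (K.link {u} hu).faces ↔ u ∉ t ∧ insert u t ∈ K.faces := by
  simp only [link, Set.mem_ofPred_eq, ← disjoint_iff_inter_eq_empty, disjoint_singleton_right,
    union_singleton]

theorem mem_faces_of_mem_link {u : V} {hu : {u} ∈ K.faces} {t : Finset V}
    (ht : t ∈ (K.link {u} hu).faces) : t ∈ K.faces :=
  K.down_closed ((mem_link_singleton hu).mp ht).2 (subset_insert u t)

theorem erase_mem_link {u : V} (hu : {u} ∈ K.faces) {F : Finset V} (hF : F ∈ K.faces)
    (huF : u ∈ F) : F.erase u ∈ (K.link {u} hu).faces :=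
  (mem_link_singleton hu).mpr ⟨notMem_erase u F, by rwa [insert_erase huF]⟩

theorem link_link {u : V} (hu : {u} ∈ K.faces) {s : Finset V}
    (hs : s ∈ (K.link {u} hu).faces) (hus : insert u s ∈ K.faces) :
    (K.link {u} hu).link s hs = K.link (insert u s) hus := by
  have hu_s : u ∉ s := ((mem_link_singleton hu).mp hs).1
  refine SComplex.ext (Set.ext fun t => ?_)
  simp only [link, Set.mem_ofPred_eq, ← disjoint_iff_inter_eq_empty, disjoint_insert_right,
    disjoint_singleton_right, union_singleton, union_insert, mem_union, hu_s, or_false]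
  tauto

variable {d : ℕ}

theorem pure_link (hpure : K.Pure (d + 1)) {u : V} (hu : {u} ∈ K.faces) :
    (K.link {u} hu).Pure d := by
  intro t ht
  obtain ⟨hut, htK⟩ := (mem_link_singleton hu).mp ht
  obtain ⟨G, hG, htG, hcard⟩ := hpure _ htK
  have huG : u ∈ G := htG (mem_insert_self u t)
  refine ⟨G.erase u, erase_mem_link hu hG huG, fun x hx => ?_,
    by rw [card_erase_of_mem huG, hcard, Nat.add_sub_cancel]⟩
  exact mem_erase.mpr ⟨fun h => hut (h ▸ hx), htG (mem_insert_of_mem hx)⟩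

theorem dimP1_link (hdim : K.dimP1 = d + 1) (hpure : K.Pure (d + 1)) {u : V}
    (hu : {u} ∈ K.faces) : (K.link {u} hu).dimP1 = d := by
  obtain ⟨G, hG, huG, hcard⟩ := hpure _ hu
  have huG : u ∈ G := huG (mem_singleton_self u)
  refine le_antisymm (csSup_le ⟨_, _, (K.link {u} hu).empty_mem, rfl⟩ ?_) ?_
  · rintro _ ⟨t, ht, rfl⟩
    obtain ⟨hut, htK⟩ := (mem_link_singleton hu).mp ht
    have := card_le_dimP1 htK
    rw [card_insert_of_notMem hut, hdim] at this
    omega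
  · have := card_le_dimP1 (erase_mem_link hu hG huG)
    rwa [card_erase_of_mem huG, hcard, Nat.add_sub_cancel] at this

theorem link_empty (hs : ∅ ∈ K.faces) : K.link ∅ hs = K :=
  SComplex.ext (Set.ext fun t => by simp [link])

theorem IsComplete.mono {X Y : Finset V} (h : K.IsComplete X) (hYX : Y ⊆ X) :
    K.IsComplete Y :=
  fun p hp q hq hpq => h p (hYX hp) q (hYX hq) hpq

theorem isComplete_of_forall_erase_mem {G : Finset V} (h3 : 3 ≤ #G)
    (h : ∀ v ∈ G, G.erase v ∈ K.faces) : K.IsComplete G := by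
  intro p hp q hq hpq
  obtain ⟨r, hr⟩ : (G \ {p, q}).Nonempty := by
    rw [← card_pos]
    have := le_card_sdiff {p, q} G
    have := card_le_two (a := p) (b := q)
    omega
  obtain ⟨hrG, hrpq⟩ := mem_sdiff.mp hr
  refine K.down_closed (h r hrG) fun x hx => mem_erase.mpr ⟨fun hxr => hrpq (hxr ▸ hx), ?_⟩
  rcases mem_insert.mp hx with rfl | hx
  · exact hp
  · exact mem_singleton.mp hx ▸ hq

theorem IsBanner.mem_faces_of_isComplete (hK : K.IsBanner) {X F : Finset V}
    (hX : K.IsComplete X) (hF : F ∈ K.faces) (hFX : F ⊆ X) (hdim : K.dimP1 ≤ #F + 1) :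
    X ∈ K.faces := by
  induction hn : #(X \ F) generalizing F with
  | zero => exact K.down_closed hF (sdiff_eq_empty_iff_subset.mp (card_eq_zero.mp hn))
  | succ n ih =>
    obtain ⟨v, hv⟩ : (X \ F).Nonempty := card_pos.mp (by omega)
    obtain ⟨hvX, hvF⟩ := mem_sdiff.mp hv
    have hvFX : insert v F ⊆ X := insert_subset hvX hFX
    have hcard : #(insert v F) = #F + 1 := card_insert_of_notMem hvF
    refine ih (hK _ (hX.mono hvFX) ⟨v, mem_insert_self v F, by rwa [erase_insert hvF]⟩
      (by omega)) hvFX (by omega) ?_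
    rw [sdiff_insert, card_erase_of_mem hv, hn, Nat.add_sub_cancel]

theorem IsBanner.link (hK : K.IsBanner) (hdim : K.dimP1 = d + 1) (hpure : K.Pure (d + 1))
    (hd : 2 ≤ d) {u : V} (hu : {u} ∈ K.faces) : (K.link {u} hu).IsBanner := by
  rintro X hX ⟨w, hwX, hXw⟩ hcard
  rw [dimP1_link hdim hpure hu] at hcard
  have hcover : ∀ q ∈ X, ∃ t ∈ (K.link {u} hu).faces, q ∈ t := fun q hq => by
    obtain ⟨r, hr, hrq⟩ := exists_mem_ne (by omega : 1 < #X) q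
    exact ⟨{q, r}, hX q hq r hr hrq.symm, mem_insert_self q _⟩
  have huX : u ∉ X := fun huX => by
    obtain ⟨t, ht, hut⟩ := hcover u huX
    exact ((mem_link_singleton hu).mp ht).1 hut
  have hcone : ∀ q ∈ X, ({u, q} : Finset V) ∈ K.faces := fun q hq => by
    obtain ⟨t, ht, hqt⟩ := hcover q hq
    exact K.down_closed ((mem_link_singleton hu).mp ht).2
      (insert_subset_insert u (singleton_subset_iff.mpr hqt))
  have hcomplete : K.IsComplete (insert u X) := by
    intro p hp q hq hpq
    rcases mem_insert.mp hp with hpu | hp <;> rcases mem_insert.mp hq with hqu | hq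
    · exact absurd (hpu.trans hqu.symm) hpq
    · rw [hpu]; exact hcone q hq
    · rw [hqu, pair_comm]; exact hcone p hp
    · exact mem_faces_of_mem_link (hX p hp q hq hpq)
  refine (mem_link_singleton hu).mpr ⟨huX, hK _ hcomplete ⟨w, mem_insert_of_mem hwX, ?_⟩ ?_⟩
  · rw [erase_insert_of_ne (ne_of_mem_of_not_mem hwX huX).symm]
    exact ((mem_link_singleton hu).mp hXw).2
  · rw [card_insert_of_notMem huX, hdim]
    omega

variable (K) in
def LinksBanner (b : ℕ) : Prop :=
  ∀ s (hs : s ∈ K.faces), #s = b → K.degree s = K.dimP1 → (K.link s hs).IsBanner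

theorem LinksBanner.isBanner (h : K.LinksBanner 0) : K.IsBanner := by
  simpa only [link_empty] using h ∅ K.empty_mem rfl degree_empty

theorem LinksBanner.link {b : ℕ} (h : K.LinksBanner (b + 1)) (hdim : K.dimP1 = d + 1)
    (hpure : K.Pure (d + 1)) {u : V} (hu : {u} ∈ K.faces) : (K.link {u} hu).LinksBanner b := by
  intro s hs hcard hdeg
  obtain ⟨hus, husK⟩ := (mem_link_singleton hu).mp hs
  obtain ⟨G, hG, hsG, hGcard⟩ := exists_card_eq_degree hs
  obtain ⟨huG, huGK⟩ := (mem_link_singleton hu).mp hG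
  rw [link_link hu hs husK]
  refine h _ husK (by rw [card_insert_of_notMem hus, hcard]) <|
    degree_eq_dimP1 huGK (insert_subset_insert u hsG) ?_
  rw [card_insert_of_notMem huG, hGcard, hdeg, dimP1_link hdim hpure hu, hdim]

theorem not_isBdTwoSimplex {t : Finset V} (ht : t ∈ K.faces) (h3 : 3 ≤ #t) :
    ¬K.IsBdTwoSimplex := by
  rintro ⟨a, b, c, -, -, -, hfaces⟩
  rw [hfaces] at ht
  exact ht.2 (eq_of_subset_of_card_le ht.1 (card_le_three.trans h3))

theorem linksBanner_bannerNumber (hb : K.bannerNumber + 3 ≤ K.dimP1) :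
    K.LinksBanner K.bannerNumber := by
  have hmem := Nat.sInf_mem (s := {b | ∀ s (hs : s ∈ K.faces), #s = b →
      K.degree s = K.dimP1 → (K.link s hs).IsBanner ∨ (K.link s hs).IsBdTwoSimplex})
    ⟨Fintype.card V + 1, fun s _ hs _ => absurd hs (by have := card_le_univ s; omega)⟩
  intro s hs hcard hdeg
  refine (hmem s hs hcard hdeg).resolve_right ?_
  obtain ⟨G, hG, hsG, hGcard⟩ := exists_card_eq_degree hs
  have hlink : G \ s ∈ (K.link s hs).faces :=
    ⟨sdiff_inter_self s G, by rwa [sdiff_union_of_subset hsG]⟩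
  exact not_isBdTwoSimplex hlink (by rw [card_sdiff_of_subset hsG]; omega)

section Chains

open FinsetChain Finsupp

variable {R : Type} [CommRing R]

def facesOfCard (K : SComplex V) (j : ℕ) : Set (Finset V) := {F | F ∈ K.faces ∧ #F = j}

def facesIn (K : SComplex V) (W : Finset V) (j : ℕ) : Set (Finset V) := (K.induced W).facesOfCard j

@[simp] theorem mem_facesIn {W F : Finset V} {j : ℕ} :
    F ∈ K.facesIn W j ↔ F ∈ K.faces ∧ F ⊆ W ∧ #F = j :=
  and_assoc

theorem facesIn_mono {W W' : Finset V} (h : W ⊆ W') (j : ℕ) : K.facesIn W j ⊆ K.facesIn W' j :=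
  fun _ hF => mem_facesIn.mpr ⟨(mem_facesIn.mp hF).1, (mem_facesIn.mp hF).2.1.trans h,
    (mem_facesIn.mp hF).2.2⟩

theorem link_facesIn_subset {u : V} (hu : {u} ∈ K.faces) (W : Finset V) (j : ℕ) :
    (K.link {u} hu).facesIn W j ⊆ K.facesIn W j := fun t ht => by
  rw [mem_facesIn] at ht ⊢
  exact ⟨mem_faces_of_mem_link ht.1, ht.2⟩

variable (R) in
/-- Faces are indexed by cardinality: this says `H̃_{j-1}(K_W; R) = 0`. -/
def CyclesBound (K : SComplex V) (W : Finset V) (j : ℕ) : Prop :=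
  ∀ z ∈ supported R R (K.facesIn W j), boundary R z = 0 →
    ∃ w ∈ supported R R (K.facesIn W (j + 1)), boundary R w = z

variable (R) in
noncomputable def toFinsetChain (L : SComplex V) (j : ℕ) : L.chains R j →ₗ[R] Finset V →₀ R :=
  lmapDomain R R (Subtype.val : L.simplex j → Finset V)

theorem toFinsetChain_injective (L : SComplex V) (j : ℕ) :
    Function.Injective (L.toFinsetChain R j) :=
  mapDomain_injective Subtype.val_injective

theorem range_toFinsetChain (L : SComplex V) (j : ℕ) :
    LinearMap.range (L.toFinsetChain R j) = supported R R (L.facesOfCard j) := by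
  rw [toFinsetChain, LinearMap.range_eq_map, ← supported_univ]
  erw [lmapDomain_supported, Set.image_univ, Subtype.range_coe_subtype]
  rfl

theorem boundary_toFinsetChain (L : SComplex V) (j : ℕ) (c : L.chains R (j + 1)) :
    boundary R (L.toFinsetChain R (j + 1) c) = L.toFinsetChain R j (L.bdry R j c) := by
  induction c using Finsupp.induction_linear with
  | zero => simp only [map_zero]
  | add c c' hc hc' => simp only [map_add, hc, hc']
  | single s a =>
    rw [toFinsetChain, toFinsetChain]
    erw [lmapDomain_apply, mapDomain_single, boundary_single, bdry,
      lsum_single, LinearMap.toSpanSingleton_apply, map_smul, lmapDomain_apply,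
      mapDomain_finsetSum, ← sum_attach s.1]
    refine congrArg (a • ·) (sum_congr rfl fun v _ => ?_)
    erw [mapDomain_smul, mapDomain_single]
    rfl

theorem CyclesBound.subsingleton_Hred {W : Finset V} {n : ℕ} (h : K.CyclesBound R W (n + 1)) :
    Subsingleton ((K.induced W).Hred R n) := by
  refine Submodule.subsingleton_iff_eq_bot.mpr (LinearMap.le_ker_iff_map.mp ?_)
  rw [Submodule.ker_mkQ]
  intro c hc
  have hrange := range_toFinsetChain (R := R) (K.induced W)
  obtain ⟨w, hw, hwc⟩ := h _ (hrange (n + 1) ▸ LinearMap.mem_range_self _ c)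
    (by rw [boundary_toFinsetChain, LinearMap.mem_ker.mp hc, map_zero])
  obtain ⟨η, rfl⟩ := LinearMap.mem_range.mp ((hrange (n + 2)).symm ▸ hw)
  exact ⟨η, toFinsetChain_injective _ _ (by rw [← boundary_toFinsetChain, hwc])⟩

theorem mem_supported_facesIn_erase {u : V} {W : Finset V} {j : ℕ} {z : Finset V →₀ R}
    (hz : z ∈ supported R R (K.facesIn W j)) (hu : ∀ F ∈ z.support, u ∉ F) :
    z ∈ supported R R (K.facesIn (W.erase u) j) := fun F hF => by
  obtain ⟨hFK, hFW, hcard⟩ := mem_facesIn.mp (hz hF)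
  exact mem_facesIn.mpr ⟨hFK, fun x hx => mem_erase.mpr ⟨fun h => hu F hF (h ▸ hx), hFW hx⟩,
    hcard⟩

theorem filter_notMem_mem_supported {u : V} {W : Finset V} {j : ℕ} {z : Finset V →₀ R}
    (hz : z ∈ supported R R (K.facesIn W j)) :
    z.filter (u ∉ ·) ∈ supported R R (K.facesIn (W.erase u) j) :=
  mem_supported_facesIn_erase (fun _ hF => hz (filter_subset _ z.support hF))
    fun _ hF => (mem_filter.mp hF).2

theorem linkChain_mem_supported_link {u : V} (hu : {u} ∈ K.faces) {W X : Finset V} {j : ℕ}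
    {z : Finset V →₀ R} (hz : z ∈ supported R R (K.facesIn W (j + 1)))
    (hX : ∀ F ∈ z.support, u ∈ F → F.erase u ⊆ X) :
    linkChain R u z ∈ supported R R ((K.link {u} hu).facesIn X j) := by
  refine linkChain_mem_supported fun F hF huF => ?_
  obtain ⟨hFK, -, hcard⟩ := mem_facesIn.mp (hz hF)
  exact mem_facesIn.mpr ⟨erase_mem_link hu hFK huF, hX F hF huF,
    by rw [card_erase_of_mem huF, hcard, Nat.add_sub_cancel]⟩

theorem exists_boundary_of_link {W : Finset V} {j : ℕ} {u : V} (hu : {u} ∈ K.faces)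
    (huW : u ∈ W) {z : Finset V →₀ R} (hz : z ∈ supported R R (K.facesIn W j))
    (hcyc : boundary R z = 0)
    (hlink : ∃ γ ∈ supported R R ((K.link {u} hu).facesIn (W.erase u) j),
      boundary R γ = linkChain R u z)
    (hrest : K.CyclesBound R (W.erase u) j) :
    ∃ w ∈ supported R R (K.facesIn W (j + 1)), boundary R w = z := by
  obtain ⟨γ, hγ, hγz⟩ := hlink
  obtain ⟨w, hw, hwz⟩ := hrest (z.filter (u ∉ ·) + γ)
    (add_mem (filter_notMem_mem_supported hz) (supported_mono (link_facesIn_subset hu _ _) hγ))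
    (by rw [map_add, boundary_filter_notMem hcyc, hγz, neg_add_cancel])
  refine ⟨w - cone R u γ, sub_mem (supported_mono (facesIn_mono (erase_subset u W) _) hw)
    (cone_mem_supported fun t ht hut => ?_), ?_⟩
  · obtain ⟨htΛ, htW, hcard⟩ := mem_facesIn.mp (hγ ht)
    exact mem_facesIn.mpr ⟨((mem_link_singleton hu).mp htΛ).2,
      insert_subset huW (htW.trans (erase_subset u W)), by rw [card_insert_of_notMem hut, hcard]⟩
  · rw [map_sub, hwz, boundary_cone, hγz, cone_linkChain, add_sub_assoc, sub_sub_cancel, add_comm,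
      filter_add_filter_not]

theorem IsBanner.cyclesBound_of_card_le (hK : K.IsBanner) {j : ℕ} (hdim : K.dimP1 = j + 1)
    (hj : 2 ≤ j) {W : Finset V} (hW : #W ≤ j + 1) : K.CyclesBound R W j := by
  intro z hz hcyc
  rcases eq_or_ne z 0 with rfl | hz0
  · exact ⟨0, zero_mem _, map_zero _⟩
  obtain ⟨F₀, hF₀⟩ := support_nonempty_iff.mpr hz0
  obtain ⟨-, hF₀W, hF₀card⟩ := mem_facesIn.mp (hz hF₀)
  obtain ⟨u, huF₀⟩ := card_pos.mp (by omega : 0 < #F₀)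
  set w := cone R u (z.filter (u ∉ ·))
  have hwz : boundary R w = z := boundary_cone_filter_notMem hcyc u
  have hwW : w ∈ supported R R {G | G = W ∧ #G = j + 1} := cone_mem_supported fun F hF huF => by
    obtain ⟨-, hFW, hcard⟩ := mem_facesIn.mp (hz (Finset.filter_subset _ z.support hF))
    have hcard' : #(insert u F) = j + 1 := by rw [card_insert_of_notMem huF, hcard]
    exact ⟨eq_of_subset_of_card_le (insert_subset (hF₀W huF₀) hFW) (by omega), hcard'⟩
  obtain ⟨G, hG⟩ : w.support.Nonempty :=
    support_nonempty_iff.mpr fun h => hz0 (by rw [← hwz, h, map_zero])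
  obtain ⟨rfl, hGcard⟩ := hwW hG
  have hw : w = single G (w G) :=
    support_subset_singleton.mp fun H hH => mem_singleton.mpr (hwW hH).1
  have herase : ∀ v ∈ G, G.erase v ∈ K.faces := fun v hv => by
    have hzv : z (G.erase v) ≠ 0 := by
      rw [← hwz, hw, boundary_single_apply_erase hv]
      exact mt (isUnit_sgn _ _).mul_left_eq_zero.mp (mem_support_iff.mp hG)
    exact (mem_facesIn.mp (hz (mem_support_iff.mpr hzv))).1
  have hGK : G ∈ K.faces := hK.mem_faces_of_isComplete
    (isComplete_of_forall_erase_mem (by omega) herase) (herase u (hF₀W huF₀)) (erase_subset u G)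
    (by rw [card_erase_of_mem (hF₀W huF₀), hdim]; omega)
  refine ⟨w, supported_mono ?_ hwW, hwz⟩
  rintro H ⟨rfl, hHcard⟩
  exact mem_facesIn.mpr ⟨hGK, subset_rfl, hHcard⟩

theorem IsBanner.exists_pair_without_common_face (hK : K.IsBanner) {j : ℕ}
    (hdim : K.dimP1 = j + 1) {W : Finset V} (hW : j + 1 < #W) {z : Finset V →₀ R}
    (hz : z ∈ supported R R (K.facesIn W j)) (hused : ∀ u ∈ W, ∃ F ∈ z.support, u ∈ F) :
    ∃ u ∈ W, ∃ v ∈ W, u ≠ v ∧ ∀ F ∈ z.support, u ∈ F → v ∉ F := by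
  by_contra! hcovered
  obtain ⟨u, huW⟩ := card_pos.mp (by omega : 0 < #W)
  obtain ⟨F₀, hF₀, -⟩ := hused u huW
  obtain ⟨hF₀K, hF₀W, hF₀card⟩ := mem_facesIn.mp (hz hF₀)
  have hWK : W ∈ K.faces := hK.mem_faces_of_isComplete (fun p hp q hq hpq => ?_) hF₀K hF₀W
    (by omega)
  · have := card_le_dimP1 hWK
    omega
  obtain ⟨F, hF, hpF, hqF⟩ := hcovered p hp q hq hpq
  exact K.down_closed (mem_facesIn.mp (hz hF)).1
    (insert_subset hpF (singleton_subset_iff.mpr hqF))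

theorem IsBanner.cyclesBound (hK : K.IsBanner) {j : ℕ} (hdim : K.dimP1 = j + 1)
    (hpure : K.Pure (j + 1)) (hj : 2 ≤ j) {W : Finset V} (hW : #W ≤ 2 * j - 1) :
    K.CyclesBound R W j := by
  obtain ⟨n, hn⟩ : ∃ n, #W = n := ⟨_, rfl⟩
  induction n using Nat.strong_induction_on generalizing K j W with
  | _ n ih =>
  rcases le_or_gt #W (j + 1) with hsmall | hbig
  · exact hK.cyclesBound_of_card_le hdim hj hsmall
  intro z hz hcyc
  by_cases hunused : ∃ u ∈ W, ∀ F ∈ z.support, u ∉ F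
  · obtain ⟨u, huW, hu⟩ := hunused
    have hcard := card_erase_of_mem huW
    obtain ⟨w, hw, hwz⟩ := ih _ (by omega) hK hdim hpure hj (by omega) hcard z
      (mem_supported_facesIn_erase hz hu) hcyc
    exact ⟨w, supported_mono (facesIn_mono (erase_subset u W) _) hw, hwz⟩
  push Not at hunused
  obtain ⟨u, huW, v, hvW, huv, hsep⟩ :=
    hK.exists_pair_without_common_face hdim hbig hz hunused
  obtain ⟨F, hF, huF⟩ := hunused u huW
  have hu : {u} ∈ K.faces :=
    K.down_closed (mem_facesIn.mp (hz hF)).1 (singleton_subset_iff.mpr huF)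
  obtain ⟨j, rfl⟩ : ∃ i, j = i + 1 := ⟨j - 1, by omega⟩
  have hcard : #((W.erase u).erase v) = #W - 2 := by
    rw [card_erase_of_mem (mem_erase.mpr ⟨huv.symm, hvW⟩), card_erase_of_mem huW]
    omega
  refine exists_boundary_of_link hu huW hz hcyc ?_
    (ih _ (by rw [← hn, card_erase_of_mem huW]; omega) hK hdim hpure hj
      (by rw [card_erase_of_mem huW]; omega) rfl)
  have hy := linkChain_mem_supported_link (X := (W.erase u).erase v) hu hz fun F hF huF => by
    obtain ⟨-, hFW, -⟩ := mem_facesIn.mp (hz hF)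
    exact fun x hx => mem_erase.mpr ⟨fun h => hsep F hF huF (h ▸ mem_of_mem_erase hx),
      erase_subset_erase u hFW hx⟩
  obtain ⟨γ, hγ, hγz⟩ := ih _ (by omega) (hK.link hdim hpure (by omega) hu)
    (dimP1_link hdim hpure hu) (pure_link hpure hu) (by omega) (by omega) hcard
    (linkChain R u z) hy (boundary_linkChain_eq_zero hcyc u)
  exact ⟨γ, supported_mono (facesIn_mono (erase_subset v _) _) hγ, hγz⟩

theorem LinksBanner.cyclesBound {b : ℕ} (hK : K.LinksBanner b) {j : ℕ} (hdim : K.dimP1 = j + 1)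
    (hpure : K.Pure (j + 1)) (hbj : b + 2 ≤ j) {W : Finset V} (hW : #W + b + 1 ≤ 2 * j) :
    K.CyclesBound R W j := by
  induction b generalizing K j W with
  | zero => exact hK.isBanner.cyclesBound hdim hpure (by omega) (by omega)
  | succ b ihb =>
  obtain ⟨n, hn⟩ : ∃ n, #W = n := ⟨_, rfl⟩
  induction n using Nat.strong_induction_on generalizing W with
  | _ n ih =>
  intro z hz hcyc
  rcases eq_or_ne z 0 with rfl | hz0
  · exact ⟨0, zero_mem _, map_zero _⟩
  obtain ⟨F, hF⟩ := support_nonempty_iff.mpr hz0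
  obtain ⟨hFK, hFW, hFcard⟩ := mem_facesIn.mp (hz hF)
  obtain ⟨u, huF⟩ := card_pos.mp (by omega : 0 < #F)
  have hu : {u} ∈ K.faces := K.down_closed hFK (singleton_subset_iff.mpr huF)
  have hcard := card_erase_of_mem (hFW huF)
  have hWpos : 0 < #W := card_pos.mpr ⟨u, hFW huF⟩
  obtain ⟨j, rfl⟩ : ∃ i, j = i + 1 := ⟨j - 1, by omega⟩
  have hy := linkChain_mem_supported_link (X := W.erase u) hu hz fun G hG _ =>
    erase_subset_erase u (mem_facesIn.mp (hz hG)).2.1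
  exact exists_boundary_of_link hu (hFW huF) hz hcyc
    (ihb (hK.link hdim hpure hu) (dimP1_link hdim hpure hu) (pure_link hpure hu) (by omega)
      (by omega) _ hy (boundary_linkChain_eq_zero hcyc u))
    (ih _ (by omega) (by omega) hcard)

end Chains

end SComplex

theorem stmt15_general (k : Type) [Field k] {V : Type} [Fintype V] [LinearOrder V]
    (K : SComplex V) (d : ℕ) (hdim : K.dimP1 = d) (hpure : K.Pure d)
    (hb : K.bannerNumber < d - 2) :
    ∀ i < d - K.bannerNumber - 1, bettiH k K i (i + d - 1) = 0 := by
  intro i hi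
  obtain ⟨n, rfl⟩ : ∃ n, d = n + 2 := ⟨d - 2, by omega⟩
  have hbanner := K.linksBanner_bannerNumber (by omega)
  refine sum_eq_zero fun W hW => ?_
  have hWcard : #W = i + n + 1 := by
    rw [(mem_powersetCard.mp hW).2]
    omega
  rw [show i + (n + 2) - 1 - i - 1 = n by omega]
  have := (hbanner.cyclesBound (R := k) (W := W) hdim hpure (by omega) (by omega)).subsingleton_Hred
  exact Module.finrank_zero_of_subsingleton

/-- Let `Δ` be a pure `(d-1)`-dimensional simplicial complex with nontrivial top
homology and `b(Δ) < d - 2`.  Then `b_{i,i+d-1}(k[Δ]) = 0` for all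
`i < d - b(Δ) - 1`; that is, `k[Δ]` satisfies property `𝔅_{d - b(Δ) - 1}`. -/
theorem stmt15 (k : Type) [Field k] {V : Type} [Fintype V] [LinearOrder V]
    (K : SComplex V) (d : ℕ) (hdim : K.dimP1 = d) (hpure : K.Pure d)
    (htop : Nontrivial (SComplex.Hred k K (d - 1)))
    (hb : K.bannerNumber < d - 2) :
    ∀ i < d - K.bannerNumber - 1, bettiH k K i (i + d - 1) = 0 :=
  stmt15_general k K d hdim hpure hb
end

section
/- If Δ is a flag simplicial complex, then b_{i,j}(k[Δ]) = 0 whenever j > 2i, where the Betti numbers b_{i,j}(k[Δ]) are given by Hochster's formula. -/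
open Finset

namespace BackelinAux

set_option linter.unusedSectionVars false

variable {V : Type} [LinearOrder V] {R : Type} [CommRing R]

/-- Sign of a vertex in a face. -/
def sg (R : Type) [CommRing R] (v : V) (F : Finset V) : R :=
  (-1 : R) ^ ((F.filter (· < v)).card)

/-- Big boundary operator on chains indexed by all finsets. -/
noncomputable def Dm (R : Type) [CommRing R] : (Finset V →₀ R) →ₗ[R] (Finset V →₀ R) :=
  Finsupp.lsum R fun F => LinearMap.toSpanSingleton R _
    (∑ u ∈ F, sg R u F • Finsupp.single (F.erase u) (1 : R))

open scoped Classical in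
/-- Cone operator at `v`. -/
noncomputable def cn (R : Type) [CommRing R] (v : V) : (Finset V →₀ R) →ₗ[R] (Finset V →₀ R) :=
  Finsupp.lsum R fun F => LinearMap.toSpanSingleton R _
    (if v ∈ F then 0 else sg R v F • Finsupp.single (insert v F) (1 : R))

open scoped Classical in
/-- De-cone operator at `v`. -/
noncomputable def dc (R : Type) [CommRing R] (v : V) : (Finset V →₀ R) →ₗ[R] (Finset V →₀ R) :=
  Finsupp.lsum R fun F => LinearMap.toSpanSingleton R _
    (if v ∈ F then sg R v F • Finsupp.single (F.erase v) (1 : R) else 0)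

open scoped Classical in
/-- Projection onto chains avoiding `v`. -/
noncomputable def qv (R : Type) [CommRing R] (v : V) : (Finset V →₀ R) →ₗ[R] (Finset V →₀ R) :=
  Finsupp.lsum R fun F => LinearMap.toSpanSingleton R _
    (if v ∈ F then 0 else Finsupp.single F (1 : R))

@[simp] lemma Dm_single (F : Finset V) (c : R) :
    Dm R (Finsupp.single F c) = c • ∑ u ∈ F, sg R u F • Finsupp.single (F.erase u) (1 : R) := by
  simp [Dm]

open scoped Classical in
lemma cn_single (v : V) (F : Finset V) (c : R) :
    cn R v (Finsupp.single F c) =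
      c • (if v ∈ F then 0 else sg R v F • Finsupp.single (insert v F) (1 : R)) := by
  simp [cn]

open scoped Classical in
lemma dc_single (v : V) (F : Finset V) (c : R) :
    dc R v (Finsupp.single F c) =
      c • (if v ∈ F then sg R v F • Finsupp.single (F.erase v) (1 : R) else 0) := by
  simp [dc]

open scoped Classical in
lemma qv_single (v : V) (F : Finset V) (c : R) :
    qv R v (Finsupp.single F c) =
      c • (if v ∈ F then 0 else Finsupp.single F (1 : R)) := by
  simp [qv]

lemma sg_mul_self (v : V) (F : Finset V) : sg R v F * sg R v F = 1 := by
  rw [sg, ← pow_add, ← two_mul, pow_mul, neg_one_sq, one_pow]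

lemma filter_lt_erase_self (v : V) (F : Finset V) :
    (F.erase v).filter (· < v) = F.filter (· < v) := by
  rw [Finset.filter_erase, Finset.erase_eq_of_notMem]
  simp

lemma sg_erase_self (v : V) (F : Finset V) : sg R v (F.erase v) = sg R v F := by
  rw [sg, sg, filter_lt_erase_self]

lemma sg_insert_self (v : V) (F : Finset V) : sg R v (insert v F) = sg R v F := by
  rw [sg, sg, Finset.filter_insert, if_neg (lt_irrefl v)]


lemma sg_insert_ne {v u : V} (hv : v ∉ F) (hu : u ≠ v) :
    sg R u (insert v F) = (if v < u then -sg R u F else sg R u F) := by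
  rw [sg, sg, Finset.filter_insert]
  by_cases h : v < u
  · rw [if_pos h, if_pos h, Finset.card_insert_of_notMem (fun hc => hv (Finset.mem_of_mem_filter _ hc)),
      pow_succ]
    ring
  · rw [if_neg h, if_neg h]

lemma sg_erase_ne {v u : V} (hu : u ∈ F) :
    sg R v (F.erase u) = (if u < v then -sg R v F else sg R v F) := by
  rw [sg, sg, Finset.filter_erase]
  by_cases h : u < v
  · rw [if_pos h]
    have hm : u ∈ F.filter (· < v) := Finset.mem_filter.2 ⟨hu, h⟩
    obtain ⟨m, hmeq⟩ : ∃ m, (F.filter (· < v)).card = m + 1 :=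
      Nat.exists_eq_add_of_lt (Finset.card_pos.2 ⟨u, hm⟩) |>.imp (fun m h => by omega)
    rw [Finset.card_erase_of_mem hm, hmeq]
    simp [pow_succ]
  · rw [if_neg h,
      Finset.erase_eq_of_notMem (s := F.filter (· < v)) (a := u)
        (fun hc => h (Finset.mem_filter.1 hc).2)]

lemma sg_cancel {v u : V} (hv : v ∉ F) (hu : u ∈ F) :
    sg R v F * sg R u (insert v F) + sg R u F * sg R v (F.erase u) = 0 := by
  have huv : u ≠ v := fun h => hv (h ▸ hu)
  rw [sg_insert_ne hv huv, sg_erase_ne hu]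
  rcases lt_or_gt_of_ne huv with h | h
  · rw [if_neg (asymm h), if_pos h]; ring
  · rw [if_pos h, if_neg (asymm h)]; ring

/-- Decomposition of a chain at a vertex. -/
lemma decomp (v : V) (x : Finset V →₀ R) : cn R v (dc R v x) + qv R v x = x := by
  have : (cn R v).comp (dc R v) + qv R v = (LinearMap.id : (Finset V →₀ R) →ₗ[R] _) := by
    apply Finsupp.lhom_ext
    intro F c
    by_cases hv : v ∈ F
    · simp only [LinearMap.add_apply, LinearMap.comp_apply, dc_single, qv_single, if_pos hv,
        smul_zero, add_zero, LinearMap.id_apply, smul_smul, map_smul, cn_single,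
        if_neg (Finset.notMem_erase v F), sg_erase_self, Finset.insert_erase hv]
      rw [one_mul, mul_assoc, sg_mul_self, mul_one, Finsupp.smul_single, smul_eq_mul, mul_one]
    · simp [dc_single, qv_single, if_neg hv, Finsupp.smul_single]
  exact DFunLike.congr_fun this x

lemma dc_cn (v : V) (x : Finset V →₀ R) : dc R v (cn R v x) = qv R v x := by
  have : (dc R v).comp (cn R v) = qv R v := by
    apply Finsupp.lhom_ext
    intro F c
    by_cases hv : v ∈ F
    · simp [cn_single, qv_single, if_pos hv]
    · simp only [LinearMap.comp_apply, cn_single, qv_single, if_neg hv, map_smul, dc_single,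
        if_pos (Finset.mem_insert_self v F), sg_insert_self, Finset.erase_insert hv]
      simp only [one_smul, smul_smul]
      rw [one_mul, sg_mul_self, mul_one]
  exact DFunLike.congr_fun this x


/-- The contracting-homotopy identity for the cone at `v`. -/
lemma homot (v : V) (x : Finset V →₀ R) :
    Dm R (cn R v x) + cn R v (Dm R x) = x := by
  have key : (Dm R).comp (cn R v) + (cn R v).comp (Dm R)
      = (LinearMap.id : (Finset V →₀ R) →ₗ[R] _) := by
    apply Finsupp.lhom_ext
    intro F c
    simp only [LinearMap.add_apply, LinearMap.comp_apply, LinearMap.id_apply]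
    by_cases hv : v ∈ F
    · rw [cn_single, if_pos hv, smul_zero, map_zero, zero_add, Dm_single, map_smul, map_sum]
      have hsum : ∀ u ∈ F.erase v, cn R v (sg R u F • Finsupp.single (F.erase u) (1 : R)) = 0 := by
        intro u hu
        have hvu : v ∈ F.erase u :=
          Finset.mem_erase.2 ⟨(Finset.ne_of_mem_erase hu).symm, hv⟩
        rw [map_smul, cn_single, if_pos hvu, smul_zero, smul_zero]
      rw [← Finset.add_sum_erase F _ hv, Finset.sum_eq_zero hsum, add_zero, map_smul, cn_single,
        if_neg (Finset.notMem_erase v F), sg_erase_self, Finset.insert_erase hv, one_smul,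
        smul_smul, smul_smul, mul_assoc, sg_mul_self, mul_one, Finsupp.smul_single, smul_eq_mul,
        mul_one]
    · have h1 : Dm R (cn R v (Finsupp.single F c)) =
          Finsupp.single F c + c • ∑ u ∈ F,
            (sg R v F * sg R u (insert v F)) • Finsupp.single (insert v (F.erase u)) (1 : R) := by
        rw [cn_single, if_neg hv, map_smul, map_smul, Dm_single, one_smul,
          Finset.sum_insert hv, Finset.erase_insert hv, sg_insert_self, smul_add, smul_add,
          smul_smul (sg R v F), sg_mul_self, one_smul, Finsupp.smul_single, smul_eq_mul, mul_one,
          Finset.smul_sum, Finset.smul_sum, Finset.smul_sum]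
        congr 1
        apply Finset.sum_congr rfl
        intro u hu
        have hne : v ≠ u := fun h => hv (h ▸ hu)
        rw [smul_smul (sg R v F), Finset.erase_insert_of_ne hne]
      have h2 : cn R v (Dm R (Finsupp.single F c)) =
          c • ∑ u ∈ F,
            (sg R u F * sg R v (F.erase u)) • Finsupp.single (insert v (F.erase u)) (1 : R) := by
        rw [Dm_single, map_smul, map_sum]
        congr 1
        apply Finset.sum_congr rfl
        intro u hu
        have hvu : v ∉ F.erase u := fun h => hv (Finset.mem_of_mem_erase h)
        rw [map_smul, cn_single, if_neg hvu, one_smul, smul_smul]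
      rw [h1, h2, add_assoc, ← smul_add, ← Finset.sum_add_distrib]
      have hz : ∀ u ∈ F,
          (sg R v F * sg R u (insert v F)) • Finsupp.single (insert v (F.erase u)) (1 : R) +
            (sg R u F * sg R v (F.erase u)) • Finsupp.single (insert v (F.erase u)) (1 : R)
          = 0 := by
        intro u hu
        rw [← add_smul, sg_cancel hv hu, zero_smul]
      rw [Finset.sum_eq_zero hz, smul_zero, add_zero]
  exact DFunLike.congr_fun key x


lemma Dm_apply_sum (x : Finset V →₀ R) :
    Dm R x = x.sum fun F c => c • ∑ u ∈ F, sg R u F • Finsupp.single (F.erase u) (1 : R) := by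
  rw [Dm, Finsupp.lsum_apply]
  exact Finsupp.sum_congr fun F _ => LinearMap.toSpanSingleton_apply R _ _ _

open scoped Classical in
lemma cn_apply_sum (v : V) (x : Finset V →₀ R) :
    cn R v x = x.sum fun F c =>
      c • (if v ∈ F then 0 else sg R v F • Finsupp.single (insert v F) (1 : R)) := by
  rw [cn, Finsupp.lsum_apply]
  exact Finsupp.sum_congr fun F _ => LinearMap.toSpanSingleton_apply R _ _ _

open scoped Classical in
lemma dc_apply_sum (v : V) (x : Finset V →₀ R) :
    dc R v x = x.sum fun F c =>
      c • (if v ∈ F then sg R v F • Finsupp.single (F.erase v) (1 : R) else 0) := by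
  rw [dc, Finsupp.lsum_apply]
  exact Finsupp.sum_congr fun F _ => LinearMap.toSpanSingleton_apply R _ _ _

open scoped Classical in
lemma qv_apply_sum (v : V) (x : Finset V →₀ R) :
    qv R v x = x.sum fun F c =>
      c • (if v ∈ F then 0 else Finsupp.single F (1 : R)) := by
  rw [qv, Finsupp.lsum_apply]
  exact Finsupp.sum_congr fun F _ => LinearMap.toSpanSingleton_apply R _ _ _

lemma support_Dm {x : Finset V →₀ R} {G : Finset V} (hG : G ∈ (Dm R x).support) :
    ∃ F ∈ x.support, ∃ u ∈ F, G = F.erase u := by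
  classical
  rw [Dm_apply_sum] at hG
  obtain ⟨F, hF, hG2⟩ := Finset.mem_biUnion.1 (Finsupp.support_sum hG)
  have hG3 := Finsupp.support_smul hG2
  obtain ⟨u, hu, hG4⟩ := Finset.mem_biUnion.1 (Finsupp.support_finset_sum hG3)
  have := Finsupp.support_smul hG4
  rw [Finset.mem_singleton.1 (Finsupp.support_single_subset this)]
  exact ⟨F, hF, u, hu, rfl⟩

lemma support_cn {v : V} {x : Finset V →₀ R} {G : Finset V} (hG : G ∈ (cn R v x).support) :
    ∃ F ∈ x.support, v ∉ F ∧ G = insert v F := by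
  classical
  rw [cn_apply_sum] at hG
  obtain ⟨F, hF, hG2⟩ := Finset.mem_biUnion.1 (Finsupp.support_sum hG)
  have hG3 := Finsupp.support_smul hG2
  by_cases hv : v ∈ F
  · rw [if_pos hv] at hG3; simp at hG3
  · rw [if_neg hv] at hG3
    have := Finsupp.support_smul hG3
    rw [Finset.mem_singleton.1 (Finsupp.support_single_subset this)]
    exact ⟨F, hF, hv, rfl⟩

lemma support_dc {v : V} {x : Finset V →₀ R} {G : Finset V} (hG : G ∈ (dc R v x).support) :
    ∃ F ∈ x.support, v ∈ F ∧ G = F.erase v := by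
  classical
  rw [dc_apply_sum] at hG
  obtain ⟨F, hF, hG2⟩ := Finset.mem_biUnion.1 (Finsupp.support_sum hG)
  have hG3 := Finsupp.support_smul hG2
  by_cases hv : v ∈ F
  · rw [if_pos hv] at hG3
    have := Finsupp.support_smul hG3
    rw [Finset.mem_singleton.1 (Finsupp.support_single_subset this)]
    exact ⟨F, hF, hv, rfl⟩
  · rw [if_neg hv] at hG3; simp at hG3

lemma support_qv {v : V} {x : Finset V →₀ R} {G : Finset V} (hG : G ∈ (qv R v x).support) :
    G ∈ x.support ∧ v ∉ G := by
  classical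
  rw [qv_apply_sum] at hG
  obtain ⟨F, hF, hG2⟩ := Finset.mem_biUnion.1 (Finsupp.support_sum hG)
  have hG3 := Finsupp.support_smul hG2
  by_cases hv : v ∈ F
  · rw [if_pos hv] at hG3; simp at hG3
  · rw [if_neg hv] at hG3
    rw [Finset.mem_singleton.1 (Finsupp.support_single_subset hG3)]
    exact ⟨hF, hv⟩

lemma dc_eq_zero {v : V} {x : Finset V →₀ R} (h : ∀ F ∈ x.support, v ∉ F) :
    dc R v x = 0 := by
  classical
  rw [dc_apply_sum]
  apply Finset.sum_eq_zero
  intro F hF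
  have := h F hF
  simp [this]

lemma qv_eq_self {v : V} {x : Finset V →₀ R} (h : ∀ F ∈ x.support, v ∉ F) :
    qv R v x = x := by
  have := decomp v x
  rwa [dc_eq_zero h, map_zero, zero_add] at this


section Key

variable {V : Type} [Fintype V] [LinearOrder V] {R : Type} [CommRing R]

lemma flag_insert (K : SComplex V) (hflag : K.IsFlag) {F : Finset V} {v : V}
    (hF : F ∈ K.faces) (hadj : ∀ w ∈ F, w ≠ v → ({w, v} : Finset V) ∈ K.faces) :
    insert v F ∈ K.faces := by
  apply hflag
  intro a ha b hb hab
  rw [Finset.mem_insert] at ha hb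
  rcases ha with rfl | ha
  · rcases hb with rfl | hb
    · exact absurd rfl hab
    · rw [Finset.pair_comm]
      exact hadj b hb (Ne.symm hab)
  · rcases hb with rfl | hb
    · exact hadj a ha hab
    · exact K.down_closed hF (Finset.insert_subset ha (Finset.singleton_subset_iff.2 hb))

/-- The main induction: a flag complex restricted to fewer than `2(n+1)` vertices has
vanishing reduced homology in dimension `n`, phrased chain-level. -/
lemma key (K : SComplex V) (hflag : K.IsFlag) :
    ∀ N n : ℕ, ∀ W : Finset V, n + W.card ≤ N → W.card ≤ 2 * n + 1 →
    ∀ z : Finset V →₀ R,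
      (∀ F ∈ z.support, F ∈ K.faces ∧ F ⊆ W ∧ F.card = n + 1) → Dm R z = 0 →
      ∃ y : Finset V →₀ R,
        (∀ F ∈ y.support, F ∈ K.faces ∧ F ⊆ W ∧ F.card = n + 2) ∧ Dm R y = z := by
  intro N
  induction N with
  | zero =>
    intro n W hN hW z hz hDz
    have hz0 : z = 0 := by
      rw [← Finsupp.support_eq_empty, Finset.eq_empty_iff_forall_notMem]
      intro F hF
      obtain ⟨-, hsub, hcard⟩ := hz F hF
      have : W.card = 0 := by omega
      have hFcard := Finset.card_le_card hsub
      omega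
    exact ⟨0, by simp, by simp [hz0]⟩
  | succ N ih =>
    classical
    intro n W hN hW z hz hDz
    by_cases hz0 : z = 0
    · exact ⟨0, by simp, by simp [hz0]⟩
    obtain ⟨F₀, hF₀⟩ := Finsupp.support_nonempty_iff.2 hz0
    obtain ⟨hF₀f, hF₀W, hF₀c⟩ := hz F₀ hF₀
    obtain ⟨v, hvF₀⟩ := Finset.card_pos.1 (by omega : 0 < F₀.card)
    have hvW : v ∈ W := hF₀W hvF₀
    by_cases hcone : ∀ u ∈ W, u ≠ v → ({u, v} : Finset V) ∈ K.faces
    · -- cone case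
      refine ⟨cn R v z, ?_, ?_⟩
      · intro G hG
        obtain ⟨F, hF, hvF, rfl⟩ := support_cn hG
        obtain ⟨hf, hsub, hcard⟩ := hz F hF
        refine ⟨flag_insert K hflag hf (fun w hw hwv => hcone w (hsub hw) hwv), ?_, ?_⟩
        · exact Finset.insert_subset hvW hsub
        · rw [Finset.card_insert_of_notMem hvF, hcard]
      · have := homot v z
        rw [hDz, map_zero, add_zero] at this
        exact this
    · -- non-cone case
      push_neg at hcone
      obtain ⟨u, huW, huv, hune⟩ := hcone
      have hW2 : 2 ≤ W.card := by
        have : ({u, v} : Finset V) ⊆ W :=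
          Finset.insert_subset huW (Finset.singleton_subset_iff.2 hvW)
        have := Finset.card_le_card this
        rwa [Finset.card_pair huv] at this
      obtain ⟨m, rfl⟩ : ∃ m, n = m + 1 := ⟨n - 1, by omega⟩
      set W' : Finset V := (W.erase v).filter (fun w => ({w, v} : Finset V) ∈ K.faces) with hW'def
      set a : Finset V →₀ R := dc R v z with hadef
      set z₂ : Finset V →₀ R := qv R v z with hz₂def
      have hzdec : cn R v a + z₂ = z := decomp v z
      -- support of a
      have ha_supp : ∀ G ∈ a.support, G ∈ K.faces ∧ G ⊆ W' ∧ G.card = m + 1 := by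
        intro G hG
        obtain ⟨F, hF, hvF, rfl⟩ := support_dc hG
        obtain ⟨hf, hsub, hcard⟩ := hz F hF
        refine ⟨K.down_closed hf (Finset.erase_subset _ _), ?_, ?_⟩
        · intro w hw
          obtain ⟨hwv, hwF⟩ := Finset.mem_erase.1 hw
          refine Finset.mem_filter.2 ⟨Finset.mem_erase.2 ⟨hwv, hsub hwF⟩, ?_⟩
          exact K.down_closed hf (Finset.insert_subset hwF (Finset.singleton_subset_iff.2 hvF))
        · rw [Finset.card_erase_of_mem hvF, hcard]
          omega
      -- avoidance facts
      have hav : ∀ F ∈ a.support, v ∉ F := by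
        intro F hF
        obtain ⟨F', _, _, rfl⟩ := support_dc hF
        exact Finset.notMem_erase _ _
      have hz₂v : ∀ F ∈ z₂.support, v ∉ F := fun F hF => (support_qv hF).2
      have hDa_av : ∀ F ∈ (Dm R a).support, v ∉ F := by
        intro F hF
        obtain ⟨F', hF', u', hu', rfl⟩ := support_Dm hF
        exact fun hc => hav F' hF' (Finset.mem_of_mem_erase hc)
      have hDz₂_av : ∀ F ∈ (Dm R z₂).support, v ∉ F := by
        intro F hF
        obtain ⟨F', hF', u', hu', rfl⟩ := support_Dm hF
        exact fun hc => hz₂v F' hF' (Finset.mem_of_mem_erase hc)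
      -- Dm a = 0 and Dm z₂ = -a
      have heq : (a - cn R v (Dm R a)) + Dm R z₂ = 0 := by
        have h1 : Dm R (cn R v a) = a - cn R v (Dm R a) := eq_sub_of_add_eq (homot v a)
        have h2 := congrArg (Dm R) hzdec
        rw [map_add, hDz, h1] at h2
        exact h2
      have hDa : Dm R a = 0 := by
        have h3 := congrArg (dc R v) heq
        rw [map_zero, map_add, map_sub, dc_eq_zero hav, dc_cn, qv_eq_self hDa_av,
          dc_eq_zero hDz₂_av, zero_sub, add_zero, neg_eq_zero] at h3
        exact h3
      have hDz₂ : Dm R z₂ = -a := by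
        rw [hDa, map_zero, sub_zero] at heq
        exact eq_neg_of_add_eq_zero_right heq
      -- cardinality of W'
      have hW'card : W'.card + 2 ≤ W.card := by
        have hsub' : W' ⊆ (W.erase v).erase u := by
          intro w hw
          obtain ⟨hw1, hw2⟩ := Finset.mem_filter.1 hw
          refine Finset.mem_erase.2 ⟨?_, hw1⟩
          rintro rfl
          exact hune hw2
        have h1 := Finset.card_le_card hsub'
        have h2a := Finset.card_erase_of_mem (Finset.mem_erase.2 ⟨huv, huW⟩)
        have h2b := Finset.card_erase_of_mem hvW
        omega
      -- first recursive call
      obtain ⟨w', hw'supp, hw'D⟩ := ih m W' (by omega) (by omega) a ha_supp hDa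
      -- z' := z₂ + w'
      have hz'supp : ∀ F ∈ (z₂ + w').support, F ∈ K.faces ∧ F ⊆ W.erase v ∧ F.card = m + 1 + 1 := by
        intro F hF
        rcases Finset.mem_union.1 (Finsupp.support_add hF) with hF' | hF'
        · obtain ⟨hFz, hvF⟩ := support_qv hF'
          obtain ⟨hf, hsub, hcard⟩ := hz F hFz
          exact ⟨hf, (Finset.subset_erase).2 ⟨hsub, hvF⟩, hcard⟩
        · obtain ⟨hf, hsub, hcard⟩ := hw'supp F hF'
          refine ⟨hf, hsub.trans ?_, hcard⟩
          exact (Finset.filter_subset _ _)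
      have hz'D : Dm R (z₂ + w') = 0 := by
        rw [map_add, hDz₂, hw'D, neg_add_cancel]
      have hWev : (W.erase v).card = W.card - 1 := Finset.card_erase_of_mem hvW
      obtain ⟨y₁, hy₁supp, hy₁D⟩ := ih (m + 1) (W.erase v) (by omega) (by omega) (z₂ + w')
        hz'supp hz'D
      -- final answer
      refine ⟨y₁ - cn R v w', ?_, ?_⟩
      · intro F hF
        rcases Finset.mem_union.1 (Finsupp.support_sub hF) with hF' | hF'
        · obtain ⟨hf, hsub, hcard⟩ := hy₁supp F hF'
          exact ⟨hf, hsub.trans (Finset.erase_subset _ _), hcard⟩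
        · obtain ⟨F', hF'w, hvF', rfl⟩ := support_cn hF'
          obtain ⟨hf, hsub, hcard⟩ := hw'supp F' hF'w
          refine ⟨flag_insert K hflag hf ?_, ?_, ?_⟩
          · intro w hw hwv
            exact (Finset.mem_filter.1 (hsub hw)).2
          · exact Finset.insert_subset hvW
              (hsub.trans ((Finset.filter_subset _ _).trans (Finset.erase_subset _ _)))
          · rw [Finset.card_insert_of_notMem hvF', hcard]
      · have h1 : Dm R (cn R v w') = w' - cn R v (Dm R w') := eq_sub_of_add_eq (homot v w')
        rw [map_sub, hy₁D, h1, hw'D]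
        rw [← hzdec]
        abel
  
end Key

section Transfer

variable {V : Type} [Fintype V] [LinearOrder V] {R : Type} [CommRing R]

/-- Inclusion of chains of a complex into the big chain module. -/
noncomputable def ι (R : Type) [CommRing R] (C : SComplex V) (j : ℕ) :
    C.chains R j →ₗ[R] (Finset V →₀ R) :=
  Finsupp.lmapDomain R R Subtype.val

lemma ι_inj (C : SComplex V) (j : ℕ) : Function.Injective (ι R C j) :=
  Finsupp.mapDomain_injective Subtype.val_injective

lemma ι_single (C : SComplex V) (j : ℕ) (s : C.simplex j) (c : R) :
    ι R C j (Finsupp.single s c) = Finsupp.single s.1 c := by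
  change Finsupp.mapDomain (Subtype.val : C.simplex j → Finset V) (Finsupp.single s c) = _
  exact Finsupp.mapDomain_single

lemma ι_bdry (C : SComplex V) (j : ℕ) (x : C.chains R (j + 1)) :
    ι R C j (C.bdry R j x) = Dm R (ι R C (j + 1) x) := by
  have h : (ι R C j).comp (C.bdry R j) = (Dm R).comp (ι R C (j + 1)) := by
    apply Finsupp.lhom_ext
    intro s c
    rw [LinearMap.comp_apply, LinearMap.comp_apply, ι_single, Dm_single, SComplex.bdry,
      Finsupp.lsum_single, LinearMap.toSpanSingleton_apply, map_smul]
    erw [map_sum]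
    congr 1
    rw [← Finset.sum_attach s.1 (fun u => sg R u s.1 • Finsupp.single (s.1.erase u) (1 : R))]
    apply Finset.sum_congr rfl
    intro t _
    erw [map_smul, ι_single]
    rfl
  exact DFunLike.congr_fun h x

lemma ι_support (C : SComplex V) (j : ℕ) (x : C.chains R j) {F : Finset V}
    (hF : F ∈ (ι R C j x).support) : F ∈ C.faces ∧ F.card = j := by
  have := Finsupp.mapDomain_support hF
  obtain ⟨s, -, rfl⟩ := Finset.mem_image.1 this
  exact s.2

lemma ι_surj (C : SComplex V) (j : ℕ) (y : Finset V →₀ R)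
    (h : ∀ F ∈ y.support, F ∈ C.faces ∧ F.card = j) :
    ∃ x : C.chains R j, ι R C j x = y := by
  classical
  refine ⟨Finsupp.subtypeDomain _ y, ?_⟩
  ext G
  by_cases hG : G ∈ C.faces ∧ G.card = j
  · have : G = Subtype.val (⟨G, hG⟩ : C.simplex j) := rfl
    change Finsupp.mapDomain (Subtype.val : C.simplex j → Finset V)
      (Finsupp.subtypeDomain _ y) G = y G
    exact Finsupp.mapDomain_apply Subtype.val_injective _ (⟨G, hG⟩ : C.simplex j)
  · have h1 : y G = 0 := by
      by_contra hc
      exact hG (h G (Finsupp.mem_support_iff.2 hc))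
    rw [h1]
    by_contra hc
    have hc' : G ∈ (ι R C j (Finsupp.subtypeDomain _ y)).support :=
      Finsupp.mem_support_iff.2 hc
    exact hG (ι_support C j _ hc')

end Transfer

end BackelinAux


/-- The monomial (flag) case of Backelin's theorem: if `Δ` is a flag simplicial
complex, then `b_{i,j}(k[Δ]) = 0` whenever `j > 2i`, where the Betti numbers are
given by Hochster's formula. -/
theorem stmt19 (k : Type) [Field k] {V : Type} [Fintype V] [LinearOrder V]
    (K : SComplex V) (hflag : K.IsFlag) (i j : ℕ) (hij : 2 * i < j) :
    bettiH k K i j = 0 := by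
  classical
  unfold bettiH
  apply Finset.sum_eq_zero
  intro W hW
  have hWcard : W.card = j := (Finset.mem_powersetCard.1 hW).2
  set n := j - i - 1 with hn
  have hbot : Submodule.map ((K.induced W).bdries k n).mkQ ((K.induced W).cycles k n) = ⊥ := by
    rw [Submodule.eq_bot_iff]
    rintro q ⟨z, hz, rfl⟩
    rw [Submodule.mkQ_apply, Submodule.Quotient.mk_eq_zero]
    have hDz : BackelinAux.Dm k (BackelinAux.ι k (K.induced W) (n + 1) z) = 0 := by
      rw [← BackelinAux.ι_bdry (K.induced W) n z, LinearMap.mem_ker.1 hz, map_zero]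
    have hsupp : ∀ F ∈ (BackelinAux.ι k (K.induced W) (n + 1) z).support,
        F ∈ K.faces ∧ F ⊆ W ∧ F.card = n + 1 := by
      intro F hF
      obtain ⟨hf, hc⟩ := BackelinAux.ι_support _ _ _ hF
      exact ⟨hf.1, hf.2, hc⟩
    obtain ⟨y, hysupp, hyD⟩ := BackelinAux.key K hflag (n + W.card) n W le_rfl (by omega) _
      hsupp hDz
    obtain ⟨x, hx⟩ := BackelinAux.ι_surj (K.induced W) (n + 2) y
      (fun F hF => ⟨⟨(hysupp F hF).1, (hysupp F hF).2.1⟩, (hysupp F hF).2.2⟩)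
    refine ⟨x, ?_⟩
    apply BackelinAux.ι_inj (K.induced W) (n + 1)
    rw [BackelinAux.ι_bdry (K.induced W) (n + 1) x, hx, hyD]
  have hfr : Module.finrank k
      ↥(Submodule.map ((K.induced W).bdries k n).mkQ ((K.induced W).cycles k n)) = 0 := by
    rw [hbot]
    exact finrank_bot k _
  exact hfr
end
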